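/- The B-polynomials are uniquely determined by: (a) B(P;u,v) = 1 when rank P = 0; (b) the v-degree of B(P;u,v) is less than (rank P)/2 when rank P > 0; and (c) the relation Σ_{0̂ ≤ x ≤ 1̂} B([0̂,x]; u^{−1}, v^{−1}) (uv)^{ρ(x)} (v−u)^{d−ρ(x)} = Σ_{0̂ ≤ x ≤ 1̂} B([x,1̂]; u,v) (uv−1)^{ρ(x)} for every interval of every Eulerian poset. That is, any assignment P ↦ B'(P;u,v) on Eulerian posets satisfying (a), (b), (c) coincides with B. -/
import Mathlib


open Finset Polynomial
open scoped Classical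

/-- The defining recursion of the Möbius function of a finite poset. -/
def MobiusRec {P : Type*} [PartialOrder P] [Fintype P] (mu : P → P → ℤ) : Prop :=
  (∀ x : P, mu x x = 1) ∧
    ∀ x y : P, x < y → (∑ z : P, if x ≤ z ∧ z ≤ y then mu x z else 0) = 0

/-- A finite poset with rank function `ρ` is Eulerian if its Möbius function satisfies
`μ(x,y) = (-1)^(ρ(y) - ρ(x))` for all `x ≤ y`. -/
def IsEulerian {P : Type*} [PartialOrder P] [Fintype P] (ρ : P → ℕ) : Prop :=
  ∀ mu : P → P → ℤ, MobiusRec mu → ∀ x y : P, x ≤ y → mu x y = (-1 : ℤ) ^ (ρ y - ρ x)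

/-- `ρ` is a rank function of rank `d`: `ρ(⊥) = 0`, `ρ(⊤) = d`, `ρ` is monotone and
increases by one along covering relations. -/
def IsRankFunction {P : Type*} [PartialOrder P] [BoundedOrder P] (ρ : P → ℕ) (d : ℕ) : Prop :=
  ρ ⊥ = 0 ∧ ρ ⊤ = d ∧ Monotone ρ ∧ ∀ x y : P, x ⋖ y → ρ y = ρ x + 1

/-- The truncation operator `τ_{< d/2}`, keeping only the terms of degree `< d/2`
(that is, `2*i < d`). -/
noncomputable def truncLtHalf (d : ℕ) (p : Polynomial ℤ) : Polynomial ℤ :=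
  ∑ i ∈ Finset.range (p.natDegree + 1),
    if 2 * i < d then Polynomial.C (p.coeff i) * Polynomial.X ^ i else 0

/-- Stanley's polynomials `G([x,y],t)` and `H([x,y],t)` of the intervals of a finite graded
poset `P` with rank function `ρ`, given by the recursion: `G = H = 1` on rank-0 intervals,
`H([x,y],t) = ∑_{x < z ≤ y} (t-1)^(ρ(z)-ρ(x)-1) G([z,y],t)`, and
`G([x,y],t) = τ_{< (ρ(y)-ρ(x))/2} ((1-t) H([x,y],t))`. -/
def GHSystem {P : Type*} [PartialOrder P] [Fintype P] (ρ : P → ℕ)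
    (G H : P → P → Polynomial ℤ) : Prop :=
  (∀ x : P, G x x = 1 ∧ H x x = 1) ∧
  (∀ x y : P, x < y →
      H x y = ∑ z : P,
        if x < z ∧ z ≤ y then (Polynomial.X - 1) ^ (ρ z - ρ x - 1) * G z y else 0) ∧
  (∀ x y : P, x < y → G x y = truncLtHalf (ρ y - ρ x) ((1 - Polynomial.X) * H x y))

/-- The field of rational functions in the two variables `u`, `v` over `ℤ`. -/
noncomputable abbrev KK : Type := FractionRing (MvPolynomial (Fin 2) ℤ)

/-- The variable `u` in `KK`. -/
noncomputable def UU : KK := algebraMap (MvPolynomial (Fin 2) ℤ) KK (MvPolynomial.X 0)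

/-- The variable `v` in `KK`. -/
noncomputable def VV : KK := algebraMap (MvPolynomial (Fin 2) ℤ) KK (MvPolynomial.X 1)

/-- Evaluation of a two-variable polynomial `b(u,v)` at a pair of elements of `KK`. -/
noncomputable def evB (b : MvPolynomial (Fin 2) ℤ) (u v : KK) : KK :=
  MvPolynomial.aeval ![u, v] b

/-- Evaluation of a one-variable polynomial at an element of `KK`. -/
noncomputable def evP (p : Polynomial ℤ) (t : KK) : KK := Polynomial.aeval t p

/-- The defining recursion of the polynomials `B([x,y];u,v)` of the intervals of a finite
graded poset `P`: `B = 1` on rank-0 intervals and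
`∑_{x ≤ z ≤ y} B([x,z];u,v) u^(ρ(y)-ρ(z)) G([z,y],u⁻¹v) = G([x,y],uv)`. -/
def BSystem {P : Type*} [PartialOrder P] [Fintype P] (ρ : P → ℕ)
    (G : P → P → Polynomial ℤ) (B : P → P → MvPolynomial (Fin 2) ℤ) : Prop :=
  (∀ x : P, B x x = 1) ∧
  ∀ x y : P, x < y →
    (∑ z : P, if x ≤ z ∧ z ≤ y then
        evB (B x z) UU VV * UU ^ (ρ y - ρ z) * evP (G z y) (UU⁻¹ * VV) else 0)
      = evP (G x y) (UU * VV)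

/-- An assignment of a two-variable polynomial to each interval of `P` satisfying:
(a) value `1` on rank-0 intervals, (b) `v`-degree less than half the rank of the interval,
and (c) the relation
`∑_{x ≤ z ≤ y} B([x,z];u⁻¹,v⁻¹)(uv)^(ρ(z)-ρ(x))(v-u)^(ρ(y)-ρ(z))
  = ∑_{x ≤ z ≤ y} B([z,y];u,v)(uv-1)^(ρ(z)-ρ(x))` on every interval. -/
def BCharacterization {P : Type*} [PartialOrder P] [Fintype P] (ρ : P → ℕ)
    (B : P → P → MvPolynomial (Fin 2) ℤ) : Prop :=
  (∀ x : P, B x x = 1) ∧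
  (∀ x y : P, x < y → 2 * MvPolynomial.degreeOf 1 (B x y) < ρ y - ρ x) ∧
  (∀ x y : P, x ≤ y →
    (∑ z : P, if x ≤ z ∧ z ≤ y then
        evB (B x z) UU⁻¹ VV⁻¹ * (UU * VV) ^ (ρ z - ρ x) * (VV - UU) ^ (ρ y - ρ z) else 0)
      = ∑ z : P, if x ≤ z ∧ z ≤ y then
          evB (B z y) UU VV * (UU * VV - 1) ^ (ρ z - ρ x) else 0)

noncomputable def pr2 (a b : ℕ) : Fin 2 →₀ ℕ := Finsupp.equivFunOnFinite.symm ![a, b]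

@[simp] lemma pr2_apply0 (a b : ℕ) : pr2 a b 0 = a := rfl
@[simp] lemma pr2_apply1 (a b : ℕ) : pr2 a b 1 = b := rfl

lemma eq_pr2 (t : Fin 2 →₀ ℕ) : t = pr2 (t 0) (t 1) := by
  ext i; fin_cases i <;> rfl

lemma algMap_injective : Function.Injective (algebraMap (MvPolynomial (Fin 2) ℤ) KK) :=
  IsFractionRing.injective _ _

lemma UU_ne_zero : UU ≠ 0 := by
  intro h
  have := algMap_injective (h.trans (map_zero _).symm)
  exact MvPolynomial.X_ne_zero 0 this

lemma VV_ne_zero : VV ≠ 0 := by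
  intro h
  have := algMap_injective (h.trans (map_zero _).symm)
  exact MvPolynomial.X_ne_zero 1 this

lemma evB_monomial (t : Fin 2 →₀ ℕ) (c : ℤ) (u v : KK) :
    evB (MvPolynomial.monomial t c) u v = algebraMap ℤ KK c * u ^ (t 0) * v ^ (t 1) := by
  rw [evB, MvPolynomial.aeval_monomial, Finsupp.prod_pow, Fin.prod_univ_two]
  simp [mul_assoc]

lemma evB_eq_sum (D : MvPolynomial (Fin 2) ℤ) (u v : KK) :
    evB D u v = ∑ s ∈ D.support, algebraMap ℤ KK (D.coeff s) * u ^ (s 0) * v ^ (s 1) := by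
  conv_lhs => rw [D.as_sum]
  rw [evB, map_sum]
  exact Finset.sum_congr rfl fun s _ => evB_monomial s _ u v

lemma pr2_eq_single (a b : ℕ) :
    Finsupp.single (0 : Fin 2) a + Finsupp.single (1 : Fin 2) b = pr2 a b := by
  ext i; fin_cases i <;> simp [pr2, Finsupp.single_apply]

lemma monomial_eq_prod (t : Fin 2 →₀ ℕ) (c : ℤ) :
    (MvPolynomial.monomial t c : MvPolynomial (Fin 2) ℤ)
      = MvPolynomial.C c * MvPolynomial.X 0 ^ (t 0) * MvPolynomial.X 1 ^ (t 1) := by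
  rw [MvPolynomial.X_pow_eq_monomial, MvPolynomial.X_pow_eq_monomial, mul_assoc,
    MvPolynomial.monomial_mul, one_mul, MvPolynomial.C_mul_monomial, mul_one,
    pr2_eq_single, ← eq_pr2]

lemma algMap_C (c : ℤ) :
    algebraMap (MvPolynomial (Fin 2) ℤ) KK (MvPolynomial.C c) = algebraMap ℤ KK c := by
  have h : (algebraMap (MvPolynomial (Fin 2) ℤ) KK).comp (MvPolynomial.C)
      = algebraMap ℤ KK := RingHom.ext_int _ _
  exact RingHom.congr_fun h c

lemma algMap_monomial (t : Fin 2 →₀ ℕ) (c : ℤ) :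
    algebraMap (MvPolynomial (Fin 2) ℤ) KK (MvPolynomial.monomial t c)
      = algebraMap ℤ KK c * UU ^ (t 0) * VV ^ (t 1) := by
  rw [monomial_eq_prod, map_mul, map_mul, map_pow, map_pow, algMap_C]; rfl

lemma ev_id (q : MvPolynomial (Fin 2) ℤ) :
    evB q UU VV = algebraMap (MvPolynomial (Fin 2) ℤ) KK q := by
  conv_rhs => rw [q.as_sum]
  rw [map_sum]
  conv_lhs => rw [q.as_sum]
  rw [evB, map_sum]
  refine Finset.sum_congr rfl fun s _ => ?_
  rw [algMap_monomial]
  show evB _ UU VV = _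
  rw [evB_monomial]

noncomputable def flip2 (M : ℕ) (D : MvPolynomial (Fin 2) ℤ) : MvPolynomial (Fin 2) ℤ :=
  ∑ s ∈ D.support, MvPolynomial.monomial (pr2 (M - s 0) (M - s 1)) (D.coeff s)

lemma evB_inv_eq (D : MvPolynomial (Fin 2) ℤ) (M : ℕ)
    (h : ∀ s ∈ D.support, s 0 ≤ M ∧ s 1 ≤ M) :
    evB D UU⁻¹ VV⁻¹ * (UU * VV) ^ M = algebraMap (MvPolynomial (Fin 2) ℤ) KK (flip2 M D) := by
  rw [← ev_id, evB_eq_sum, flip2]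
  simp only [evB, map_sum]
  rw [Finset.sum_mul]
  refine Finset.sum_congr rfl fun s hs => ?_
  have h0 := (h s hs).1; have h1 := (h s hs).2
  show _ = evB (MvPolynomial.monomial (pr2 (M - s 0) (M - s 1)) (D.coeff s)) UU VV
  rw [evB_monomial, pr2_apply0, pr2_apply1,
    pow_sub₀ _ UU_ne_zero h0, pow_sub₀ _ VV_ne_zero h1, mul_pow, inv_pow, inv_pow]
  ring

lemma vanish (D : MvPolynomial (Fin 2) ℤ) (n : ℕ)
    (hdeg : 2 * MvPolynomial.degreeOf 1 D < n)
    (heq : evB D UU⁻¹ VV⁻¹ * (UU * VV) ^ n = evB D UU VV) : D = 0 := by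
  by_contra hD
  set m := MvPolynomial.degreeOf 0 D with hm
  set b := MvPolynomial.degreeOf 1 D with hb
  have hsupp : ∀ s ∈ D.support, s 0 ≤ n + m ∧ s 1 ≤ n + m := fun s hs => by
    have h0 := MvPolynomial.monomial_le_degreeOf 0 hs
    have h1 := MvPolynomial.monomial_le_degreeOf 1 hs
    omega
  have heq2 : evB D UU⁻¹ VV⁻¹ * (UU * VV) ^ (n + m) = evB D UU VV * (UU * VV) ^ m := by
    rw [pow_add, ← mul_assoc, heq]
  have hmon : ((MvPolynomial.X 0 * MvPolynomial.X 1 : MvPolynomial (Fin 2) ℤ)) ^ m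
      = MvPolynomial.monomial (pr2 m m) 1 := by
    have hps : (Finsupp.single (0 : Fin 2) m + Finsupp.single (1 : Fin 2) m) = pr2 m m := by
      ext i; fin_cases i <;> simp [pr2, Finsupp.single_apply]
    rw [mul_pow, MvPolynomial.X_pow_eq_monomial, MvPolynomial.X_pow_eq_monomial,
      MvPolynomial.monomial_mul, one_mul, hps]
  have hR : evB D UU VV * (UU * VV) ^ m
      = algebraMap (MvPolynomial (Fin 2) ℤ) KK (D * (MvPolynomial.X 0 * MvPolynomial.X 1) ^ m) := by
    rw [ev_id, map_mul, map_pow, map_mul]; rfl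
  have hpoly : flip2 (n + m) D = D * (MvPolynomial.X 0 * MvPolynomial.X 1) ^ m :=
    algMap_injective (by rw [← evB_inv_eq D (n + m) hsupp, heq2, hR])
  -- pick s in support with s 1 = b
  have hne : D.support.Nonempty := by
    rwa [Finset.nonempty_iff_ne_empty, Ne, MvPolynomial.support_eq_empty]
  obtain ⟨s, hs, hsb⟩ := Finset.exists_mem_eq_sup D.support hne (fun s => s 1)
  have hsb' : s 1 = b := by rw [hb, MvPolynomial.degreeOf_eq_sup, hsb]
  -- coefficient of pr2 (s 0 + m) (s 1 + m) in RHS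
  have hle : pr2 m m ≤ pr2 (s 0 + m) (s 1 + m) := by
    rw [Finsupp.le_iff]; intro i _; fin_cases i <;> simp
  have hsub : pr2 (s 0 + m) (s 1 + m) - pr2 m m = s := by
    rw [eq_pr2 s]; ext i; fin_cases i <;> simp [Finsupp.tsub_apply]
  have hcoeff : MvPolynomial.coeff (pr2 (s 0 + m) (s 1 + m)) (flip2 (n + m) D) ≠ 0 := by
    rw [hpoly, hmon, MvPolynomial.coeff_mul_monomial', if_pos hle, hsub, mul_one]
    exact MvPolynomial.mem_support_iff.mp hs
  rw [flip2] at hcoeff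
  simp only [MvPolynomial.coeff_sum] at hcoeff
  obtain ⟨s', hs', hcs'⟩ := Finset.exists_ne_zero_of_sum_ne_zero hcoeff
  rw [MvPolynomial.coeff_monomial] at hcs'
  have heqm : pr2 (n + m - s' 0) (n + m - s' 1) = pr2 (s 0 + m) (s 1 + m) := by
    by_contra hcon; exact hcs' (if_neg hcon)
  have h1 : n + m - s' 1 = s 1 + m := by
    have := congrFun (congrArg (fun f : Fin 2 →₀ ℕ => (f : Fin 2 → ℕ)) heqm) 1
    simpa using this
  have hs'1 : s' 1 ≤ b := by
    rw [hb, MvPolynomial.degreeOf_eq_sup]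
    exact Finset.le_sup (f := fun t : Fin 2 →₀ ℕ => t 1) hs'
  omega

lemma rho_strictMono {P : Type*} [PartialOrder P] [BoundedOrder P] [Fintype P]
    {ρ : P → ℕ} {d : ℕ} (hrk : IsRankFunction ρ d) {x y : P} (h : x < y) : ρ x < ρ y := by
  have hw : IsStronglyAtomic P :=
    IsStronglyAtomic.of_wellFounded_lt (Finite.to_wellFoundedLT).wf
  obtain ⟨z, hz, hzy⟩ := h.exists_covby_le
  have h1 := hrk.2.2.2 x z hz
  have h2 := hrk.2.2.1 hzy
  omega

/-- The `B`-polynomials are uniquely determined by the properties (a), (b), (c) of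
`BCharacterization`: any two assignments satisfying them coincide on all intervals. -/
theorem B_unique {P : Type*} [PartialOrder P] [BoundedOrder P] [Fintype P]
    (ρ : P → ℕ) (d : ℕ) (hrk : IsRankFunction ρ d) (hE : IsEulerian ρ)
    (B₁ B₂ : P → P → MvPolynomial (Fin 2) ℤ)
    (h₁ : BCharacterization ρ B₁) (h₂ : BCharacterization ρ B₂) :
    ∀ x y : P, x ≤ y → B₁ x y = B₂ x y := by
  have hmono := hrk.2.2.1
  suffices H : ∀ n : ℕ, ∀ x y : P, x ≤ y → ρ y - ρ x = n → B₁ x y = B₂ x y by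
    intro x y hxy; exact H _ x y hxy rfl
  intro n
  induction n using Nat.strong_induction_on with
  | _ n IH =>
  intro x y hxy hn
  rcases eq_or_lt_of_le hxy with rfl | hlt
  · rw [h₁.1, h₂.1]
  set D := B₁ x y - B₂ x y with hD
  have hsub : ∀ u v : KK, evB D u v = evB (B₁ x y) u v - evB (B₂ x y) u v := fun u v => by
    rw [hD, evB, evB, evB, map_sub]
  have key : evB D UU⁻¹ VV⁻¹ * (UU * VV) ^ n = evB D UU VV := by
    have E₁ := h₁.2.2 x y hxy
    have E₂ := h₂.2.2 x y hxy
    have hL : (∑ z : P, if x ≤ z ∧ z ≤ y then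
          evB (B₁ x z) UU⁻¹ VV⁻¹ * (UU * VV) ^ (ρ z - ρ x) * (VV - UU) ^ (ρ y - ρ z) else 0)
        - (∑ z : P, if x ≤ z ∧ z ≤ y then
          evB (B₂ x z) UU⁻¹ VV⁻¹ * (UU * VV) ^ (ρ z - ρ x) * (VV - UU) ^ (ρ y - ρ z) else 0)
        = evB D UU⁻¹ VV⁻¹ * (UU * VV) ^ n := by
      rw [← Finset.sum_sub_distrib,
        Finset.sum_eq_single_of_mem y (Finset.mem_univ y) (fun z _ hzy => by
          split_ifs with hc
          · have hzlt : z < y := lt_of_le_of_ne hc.2 hzy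
            have hρ : ρ z - ρ x < n := by
              have hz1 := rho_strictMono hrk hzlt
              have hz2 := hmono hc.1
              omega
            rw [IH (ρ z - ρ x) hρ x z hc.1 rfl, sub_self]
          · exact sub_self 0)]
      rw [if_pos ⟨hxy, le_refl y⟩, if_pos ⟨hxy, le_refl y⟩]
      simp only [Nat.sub_self, pow_zero, mul_one]
      rw [← sub_mul, hn, hsub]
    have hR : (∑ z : P, if x ≤ z ∧ z ≤ y then
          evB (B₁ z y) UU VV * (UU * VV - 1) ^ (ρ z - ρ x) else 0)
        - (∑ z : P, if x ≤ z ∧ z ≤ y then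
          evB (B₂ z y) UU VV * (UU * VV - 1) ^ (ρ z - ρ x) else 0)
        = evB D UU VV := by
      rw [← Finset.sum_sub_distrib,
        Finset.sum_eq_single_of_mem x (Finset.mem_univ x) (fun z _ hzx => by
          split_ifs with hc
          · have hzlt : x < z := lt_of_le_of_ne hc.1 (Ne.symm hzx)
            have hρ : ρ y - ρ z < n := by
              have hz1 := rho_strictMono hrk hzlt
              have hz2 := hmono hc.2
              omega
            rw [IH (ρ y - ρ z) hρ z y hc.2 rfl, sub_self]
          · exact sub_self 0)]
      rw [if_pos ⟨le_refl x, hxy⟩, if_pos ⟨le_refl x, hxy⟩]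
      simp only [Nat.sub_self, pow_zero, mul_one]
      rw [hsub]
    rw [← hL, ← hR, E₁, E₂]
  have hdeg : 2 * MvPolynomial.degreeOf 1 D < n := by
    have d1 := h₁.2.1 x y hlt
    have d2 := h₂.2.1 x y hlt
    have d3 := MvPolynomial.degreeOf_sub_le 1 (B₁ x y) (B₂ x y)
    rw [← hD] at d3
    rw [hn] at d1 d2
    omega
  have hD0 : D = 0 := vanish D n hdeg key
  exact sub_eq_zero.mp hD0
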